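/- arXiv:1806.03292 — 6 statements merged into one kernel-verified Lean document; each statement's English description precedes it below -/
import Mathlib

section
/- Fix positive constants λ, δ, d, ω, α, μ, ξ, Λ. With f as in the SVIQR self-consistency equation (f(Θ) = λΛ(d+ω+α+δλΘ+δμ)/(ξ(AΘ²+BΘ+C)) with A = δλ², B = (δd+ω+d+α+δμ)λ, C = (d+α+ω)d+(d+α)μ), the equation f(Θ) = 1 has a solution in (0,∞) if and only if f(0) > 1. -/
set_option maxHeartbeats 1000000 in
theorem sviqr_selfconsistency_solution_iff (Λ lam δ d ω α μ ξ : ℝ)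
    (hΛ : 0 < Λ) (hlam : 0 < lam) (hδ : 0 < δ) (hd : 0 < d) (hω : 0 < ω)
    (hα : 0 < α) (hμ : 0 < μ) (hξ : 0 < ξ)
    (f : ℝ → ℝ)
    (hf : f = fun Θ : ℝ =>
      lam * Λ * (d + ω + α + δ * lam * Θ + δ * μ) /
        (ξ * ((δ * lam ^ 2) * Θ ^ 2 +
          ((δ * d + ω + d + α + δ * μ) * lam) * Θ +
          ((d + α + ω) * d + (d + α) * μ)))) :
    (∃ Θ > 0, f Θ = 1) ↔ f 0 > 1 := by
  subst hf
  set A : ℝ := ξ * (δ * lam ^ 2) with hA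
  set B : ℝ := ξ * ((δ * d + ω + d + α + δ * μ) * lam) - lam * Λ * (δ * lam) with hB
  set C : ℝ := ξ * ((d + α + ω) * d + (d + α) * μ) - lam * Λ * (d + ω + α + δ * μ) with hC
  have hApos : 0 < A := by positivity
  -- denominator positivity
  have hden : ∀ Θ : ℝ, 0 ≤ Θ → 0 < ξ * ((δ * lam ^ 2) * Θ ^ 2 +
      ((δ * d + ω + d + α + δ * μ) * lam) * Θ +
      ((d + α + ω) * d + (d + α) * μ)) := by
    intro Θ hΘ
    have h1 : 0 ≤ (δ * lam ^ 2) * Θ ^ 2 := by positivity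
    have h2 : 0 ≤ ((δ * d + ω + d + α + δ * μ) * lam) * Θ := by positivity
    have h3 : 0 < (d + α + ω) * d + (d + α) * μ := by positivity
    positivity
  -- f Θ = 1 ↔ g Θ = 0 for Θ ≥ 0
  have key : ∀ Θ : ℝ, 0 ≤ Θ →
      ((lam * Λ * (d + ω + α + δ * lam * Θ + δ * μ) /
        (ξ * ((δ * lam ^ 2) * Θ ^ 2 +
          ((δ * d + ω + d + α + δ * μ) * lam) * Θ +
          ((d + α + ω) * d + (d + α) * μ))) = 1)
      ↔ A * Θ ^ 2 + B * Θ + C = 0) := by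
    intro Θ hΘ
    rw [div_eq_one_iff_eq (ne_of_gt (hden Θ hΘ))]
    constructor
    · intro h; rw [hA, hB, hC]; nlinarith [h]
    · intro h; nlinarith [h]
  have hC0 : (0:ℝ) ≤ 0 := le_refl 0
  have hf0 : (lam * Λ * (d + ω + α + δ * lam * 0 + δ * μ) /
        (ξ * ((δ * lam ^ 2) * 0 ^ 2 +
          ((δ * d + ω + d + α + δ * μ) * lam) * 0 +
          ((d + α + ω) * d + (d + α) * μ))) > 1) ↔ C < 0 := by
    rw [gt_iff_lt, lt_div_iff₀ (hden 0 le_rfl)]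
    rw [hC]
    constructor <;> intro h <;> nlinarith [h]
  simp only [hf0]
  constructor
  · rintro ⟨Θ, hΘ, hfΘ⟩
    have hg : A * Θ ^ 2 + B * Θ + C = 0 := (key Θ hΘ.le).1 hfΘ
    by_contra hCge
    push_neg at hCge
    rcases le_or_gt 0 B with hBpos | hBneg
    · nlinarith [sq_nonneg Θ, mul_pos hApos (mul_pos hΘ hΘ)]
    · -- B < 0 implies C < 0, contradiction
      have hB' : ξ * (δ * d + ω + d + α + δ * μ) < lam * Λ * δ := by
        rw [hB] at hBneg; nlinarith
      have hpoly : δ * ((d + α + ω) * d + (d + α) * μ) ≤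
          (δ * d + ω + d + α + δ * μ) * (d + ω + α + δ * μ) := by
        have hid : (δ * d + ω + d + α + δ * μ) * (d + ω + α + δ * μ) -
            δ * ((d + α + ω) * d + (d + α) * μ) =
            δ * μ * ω + δ * δ * μ * (d + μ) + (ω + d + α) * (d + ω + α + δ * μ) := by
          ring
        have h1 : 0 < δ * μ * ω := by positivity
        have h2 : 0 < δ * δ * μ * (d + μ) := by positivity
        have h3 : 0 < (ω + d + α) * (d + ω + α + δ * μ) := by positivity
        linarith
      have hstep : ξ * (δ * ((d + α + ω) * d + (d + α) * μ)) <
          lam * Λ * δ * (d + ω + α + δ * μ) := by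
        calc ξ * (δ * ((d + α + ω) * d + (d + α) * μ))
            ≤ ξ * ((δ * d + ω + d + α + δ * μ) * (d + ω + α + δ * μ)) :=
              mul_le_mul_of_nonneg_left hpoly hξ.le
          _ = (ξ * (δ * d + ω + d + α + δ * μ)) * (d + ω + α + δ * μ) := by ring
          _ < (lam * Λ * δ) * (d + ω + α + δ * μ) :=
              mul_lt_mul_of_pos_right hB' (by positivity)
      have hcontra : C < 0 := by
        rw [hC]
        nlinarith [hstep]
      linarith
  · intro hCneg
    -- IVT: g(0) = C < 0, find T with g(T) > 0
    set g : ℝ → ℝ := fun Θ => A * Θ ^ 2 + B * Θ + C with hg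
    have hcont : Continuous g := by fun_prop
    set T : ℝ := max 1 ((|B| + |C| + 1) / A) with hT
    have hT1 : (1:ℝ) ≤ T := le_max_left _ _
    have hT2 : (|B| + |C| + 1) / A ≤ T := le_max_right _ _
    have hAT : |B| + |C| + 1 ≤ A * T := by
      rw [div_le_iff₀ hApos] at hT2; linarith [hT2]
    have hgT : 0 < g T := by
      have h1 : A * T ^ 2 ≥ (|B| + |C| + 1) * T := by nlinarith
      have h2 : B * T ≥ -(|B| * T) := by nlinarith [abs_nonneg B, neg_abs_le B]
      have h3 : C ≥ -|C| := neg_abs_le C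
      have h4 : (|B| + |C| + 1) * T ≥ |B| * T + |C| + 1 := by nlinarith [abs_nonneg C]
      simp only [hg]
      nlinarith
    have hg0 : g 0 < 0 := by simp [hg]; linarith
    obtain ⟨Θ, hΘmem, hΘ⟩ : ∃ x ∈ Set.Ioo (0:ℝ) T, g x = 0 := by
      have := intermediate_value_Ioo (by linarith : (0:ℝ) ≤ T) hcont.continuousOn
      have hmem : (0:ℝ) ∈ Set.Ioo (g 0) (g T) := ⟨hg0, hgT⟩
      obtain ⟨x, hx, hgx⟩ := this hmem
      exact ⟨x, hx, hgx⟩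
    exact ⟨Θ, hΘmem.1, (key Θ hΘmem.1.le).2 hΘ⟩
end

section
/- Fix positive constants δ, λ, ξ, μ, ω, d, f₀ with 0 < δ < 1. Let A = δλ²(1+f₀), B = δλξ + λ(1+f₀)(d+ω+δμ), C = (d+μ+ω)ξ. Then δλC - (ω+δμ+d)B ≤ 0 if and only if δ(1-δ)ξμ / ((1+f₀)(ω+d+δμ)²) ≤ 1. -/
theorem sviqs_sign_condition_iff (δ lam ξ μ ω d f₀ : ℝ)
    (hδ : 0 < δ) (hδ1 : δ < 1) (hlam : 0 < lam) (hξ : 0 < ξ) (hμ : 0 < μ)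
    (hω : 0 < ω) (hd : 0 < d) (hf₀ : 0 < f₀)
    (A B C : ℝ)
    (hA : A = δ * lam ^ 2 * (1 + f₀))
    (hB : B = δ * lam * ξ + lam * (1 + f₀) * (d + ω + δ * μ))
    (hC : C = (d + μ + ω) * ξ) :
    δ * lam * C - (ω + δ * μ + d) * B ≤ 0 ↔
      δ * (1 - δ) * ξ * μ / ((1 + f₀) * (ω + d + δ * μ) ^ 2) ≤ 1 := by
  subst hA hB hC
  rw [div_le_one (by positivity)]
  constructor <;> intro h <;> nlinarith [mul_pos hδ hξ, sq_nonneg (ω + d + δ * μ), hlam.le]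
end

section
/- Fix positive constants δ, λ, ξ, μ, ω, d, f₀ with δ < 1, and suppose δ(1-δ)ξμ/((1+f₀)(ω+d+δμ)²) > 1. Let h(Θ) = -δλA·Θ² - 2(ω+δμ+d)A·Θ + δλC - (ω+δμ+d)B where A = δλ²(1+f₀), B = δλξ + λ(1+f₀)(d+ω+δμ), C = (d+μ+ω)ξ. Then h has exactly one positive root Θ₂ = (-(ω+d+δμ) + √(δ(1-δ)ξμ/(1+f₀))) / (δλ), and h(Θ) > 0 for 0 ≤ Θ < Θ₂ while h(Θ) < 0 for Θ > Θ₂. -/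
set_option maxHeartbeats 1000000


theorem sviqs_quadratic_root (δ lam ξ μ ω d f₀ : ℝ)
    (hδ : 0 < δ) (hδ1 : δ < 1) (hlam : 0 < lam) (hξ : 0 < ξ) (hμ : 0 < μ)
    (hω : 0 < ω) (hd : 0 < d) (hf₀ : 0 < f₀)
    (hR1 : δ * (1 - δ) * ξ * μ / ((1 + f₀) * (ω + d + δ * μ) ^ 2) > 1)
    (A B C : ℝ)
    (hA : A = δ * lam ^ 2 * (1 + f₀))
    (hB : B = δ * lam * ξ + lam * (1 + f₀) * (d + ω + δ * μ))
    (hC : C = (d + μ + ω) * ξ)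
    (h : ℝ → ℝ)
    (hh : h = fun Θ : ℝ =>
      -(δ * lam * A) * Θ ^ 2 - 2 * (ω + δ * μ + d) * A * Θ +
        (δ * lam * C - (ω + δ * μ + d) * B))
    (Θ₂ : ℝ)
    (hΘ₂ : Θ₂ = (-(ω + d + δ * μ) + Real.sqrt (δ * (1 - δ) * ξ * μ / (1 + f₀))) / (δ * lam)) :
    0 < Θ₂ ∧ h Θ₂ = 0 ∧ (∀ Θ > 0, h Θ = 0 → Θ = Θ₂) ∧
      (∀ Θ, 0 ≤ Θ → Θ < Θ₂ → 0 < h Θ) ∧ (∀ Θ > Θ₂, h Θ < 0) := by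
  set k : ℝ := ω + d + δ * μ with hk
  set s : ℝ := Real.sqrt (δ * (1 - δ) * ξ * μ / (1 + f₀)) with hs
  have hf₀' : (0:ℝ) < 1 + f₀ := by linarith
  have hk0 : 0 < k := by positivity
  have hs0 : 0 ≤ s := Real.sqrt_nonneg _
  have hrad : (0:ℝ) ≤ δ * (1 - δ) * ξ * μ / (1 + f₀) := by
    apply div_nonneg _ hf₀'.le
    nlinarith [mul_pos (mul_pos (mul_pos hδ (by linarith : (0:ℝ) < 1 - δ)) hξ) hμ]
  have hs2 : s ^ 2 = δ * (1 - δ) * ξ * μ / (1 + f₀) := by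
    rw [hs, sq, Real.mul_self_sqrt hrad]
  have hks : k < s := by
    have h1 : k ^ 2 < s ^ 2 := by
      rw [hs2]
      rw [gt_iff_lt, lt_div_iff₀ (by positivity)] at hR1
      rw [lt_div_iff₀ hf₀']
      nlinarith
    nlinarith
  have hP : (0:ℝ) < δ * lam := by positivity
  have hA0 : 0 < A := by rw [hA]; positivity
  have hΘ₂pos : 0 < Θ₂ := by
    rw [hΘ₂]
    exact div_pos (by linarith) hP
  have key : ∀ Θ : ℝ, h Θ = -(A / (δ * lam)) * ((δ * lam * Θ + k) ^ 2 - s ^ 2) := by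
    intro Θ
    rw [hh, hs2, hA, hB, hC]
    simp only
    field_simp
    ring
  have hPΘ₂ : δ * lam * Θ₂ + k = s := by
    rw [hΘ₂]
    field_simp
    ring
  have hAP : 0 < A / (δ * lam) := div_pos hA0 hP
  refine ⟨hΘ₂pos, ?_, ?_, ?_, ?_⟩
  · rw [key, hPΘ₂]; ring
  · intro Θ hΘ hΘ0
    rw [key] at hΘ0
    have h2 : (δ * lam * Θ + k) ^ 2 - s ^ 2 = 0 :=
      (mul_eq_zero.mp hΘ0).resolve_left (neg_ne_zero.mpr hAP.ne')
    have hfac : (δ * lam * Θ + k - s) * (δ * lam * Θ + k + s) = 0 := by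
      linear_combination h2
    have hpos : 0 < δ * lam * Θ + k + s := by
      have := mul_pos hP hΘ
      linarith
    have h3 : δ * lam * Θ + k - s = 0 :=
      (mul_eq_zero.mp hfac).resolve_right hpos.ne'
    have h4 : δ * lam * Θ = δ * lam * Θ₂ := by linarith [hPΘ₂]
    exact mul_left_cancel₀ hP.ne' h4
  · intro Θ hΘ0 hΘlt
    rw [key]
    have hmul : δ * lam * Θ < δ * lam * Θ₂ := mul_lt_mul_of_pos_left hΘlt hP
    have h4 : δ * lam * Θ + k < s := by linarith [hPΘ₂]
    have h5 : 0 < δ * lam * Θ + k := by nlinarith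
    have h6 : (δ * lam * Θ + k) ^ 2 < s ^ 2 := by nlinarith
    nlinarith [mul_pos hAP (sub_pos.mpr h6)]
  · intro Θ hΘ
    rw [key]
    have hmul : δ * lam * Θ₂ < δ * lam * Θ := mul_lt_mul_of_pos_left hΘ hP
    have h4 : s < δ * lam * Θ + k := by linarith [hPΘ₂]
    have h6 : s ^ 2 < (δ * lam * Θ + k) ^ 2 := by nlinarith
    nlinarith [mul_pos hAP (sub_pos.mpr h6)]
end

section
/- If ω ≥ γ = η and all parameters δ, ξ = γ+β+d, μ, d are positive with 0 < δ < 1 and f₀ = β/(η+d), then R₀¹(μ) := δ(1-δ)ξμ/((1+f₀)(ω+d+δμ)²) ≤ 1. -/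
theorem no_backward_bifurcation (ω γ η β d δ μ ξ f₀ : ℝ)
    (hω : 0 < ω) (hγ : 0 < γ) (hη : 0 < η) (hβ : 0 < β) (hd : 0 < d)
    (hδ : 0 < δ) (hδ1 : δ < 1) (hμ : 0 < μ)
    (hωγ : ω ≥ γ) (hγη : γ = η)
    (hξ : ξ = γ + β + d) (hf₀ : f₀ = β / (η + d)) :
    δ * (1 - δ) * ξ * μ / ((1 + f₀) * (ω + d + δ * μ) ^ 2) ≤ 1 := by
  have hηd : 0 < η + d := by linarith
  have hf : 0 < 1 + f₀ := by
    rw [hf₀]; positivity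
  have hden : 0 < (1 + f₀) * (ω + d + δ * μ) ^ 2 := by
    have : 0 < ω + d + δ * μ := by positivity
    positivity
  rw [div_le_one hden, hf₀, hξ, hγη]
  rw [show (1 : ℝ) + β / (η + d) = (η + d + β) / (η + d) by field_simp]
  rw [div_mul_eq_mul_div, le_div_iff₀ hηd]
  have hωη : ω ≥ η := hγη ▸ hωγ
  have key : δ * (1 - δ) * μ * (η + d) ≤ (ω + d + δ * μ) ^ 2 := by
    nlinarith [sq_nonneg (ω + d - δ * μ), mul_pos (mul_pos hδ hμ) hηd,
      mul_nonneg (mul_nonneg hδ.le hμ.le) (sub_nonneg.2 hωη)]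
  nlinarith [mul_nonneg (by linarith : (0:ℝ) ≤ η + β + d) (sub_nonneg.2 key)]
end

section
/- Consider the equation Φ* = (1/⟨k⟩) · Σᵢ i·p(i)·b·Φ*/(d + b·i·Φ*) over i = 1,…,n, where p(i) ≥ 0, Σᵢ p(i) = 1, ⟨k⟩ = Σᵢ i·p(i) > 0, and b > d > 0. Then this equation has a unique solution Φ* ∈ (0, 1]. -/
theorem demographic_steady_state (n : ℕ) (p : Fin n → ℝ) (b d : ℝ)
    (hp : ∀ i, 0 ≤ p i) (hsum : ∑ i : Fin n, p i = 1)
    (kbar : ℝ) (hkbar : kbar = ∑ i : Fin n, ((i : ℝ) + 1) * p i) (hkpos : 0 < kbar)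
    (hbd : d < b) (hd : 0 < d) :
    ∃! Φ : ℝ, 0 < Φ ∧ Φ ≤ 1 ∧
      Φ = (1 / kbar) * ∑ i : Fin n, ((i : ℝ) + 1) * p i * b * Φ / (d + b * ((i : ℝ) + 1) * Φ) := by
  have hb : 0 < b := hd.trans hbd
  set f : ℝ → ℝ := fun x => ∑ i : Fin n, ((i : ℝ) + 1) * p i * b / (d + b * ((i : ℝ) + 1) * x)
    with hf
  have hipos : ∀ i : Fin n, (0:ℝ) < (i : ℝ) + 1 := fun i => by positivity
  have hden : ∀ (i : Fin n) (x : ℝ), 0 ≤ x → 0 < d + b * ((i : ℝ) + 1) * x := by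
    intro i x hx
    have h1 : 0 ≤ b * ((i:ℝ)+1) * x := by positivity
    linarith
  obtain ⟨j, hj⟩ : ∃ j, 0 < p j := by
    by_contra h
    push_neg at h
    have hz : ∀ i, p i = 0 := fun i => le_antisymm (h i) (hp i)
    simp [hz] at hsum
  -- f is strictly decreasing on [0, ∞)
  have hanti : StrictAntiOn f (Set.Ici 0) := by
    intro x hx y hy hxy
    simp only [Set.mem_Ici] at hx hy
    have hDlt : ∀ i : Fin n, d + b * ((i:ℝ)+1) * x < d + b * ((i:ℝ)+1) * y := by
      intro i
      have h0 : (0:ℝ) < b * ((i:ℝ)+1) := by positivity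
      nlinarith
    apply Finset.sum_lt_sum
    · intro i _
      have h1 := hden i x hx
      have hnum : (0:ℝ) ≤ ((i:ℝ)+1) * p i * b := mul_nonneg (mul_nonneg (hipos i).le (hp i)) hb.le
      exact div_le_div_of_nonneg_left hnum h1 (hDlt i).le
    · refine ⟨j, Finset.mem_univ j, ?_⟩
      have h1 := hden j x hx
      have hnum : (0:ℝ) < ((j:ℝ)+1) * p j * b := mul_pos (mul_pos (hipos j) hj) hb
      exact div_lt_div_of_pos_left hnum h1 (hDlt j)
  -- continuity on [0,1]
  have hcont : ContinuousOn f (Set.Icc 0 1) := by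
    apply continuousOn_finset_sum
    intro i _
    apply ContinuousOn.div continuousOn_const
    · fun_prop
    · intro x hx
      exact ne_of_gt (hden i x hx.1)
  -- value at 0
  have hf0 : f 0 = (b / d) * kbar := by
    rw [hf, hkbar, Finset.mul_sum]
    apply Finset.sum_congr rfl
    intro i _
    field_simp
    ring
  have hf0gt : kbar < f 0 := by
    rw [hf0]
    have : 1 < b / d := (one_lt_div hd).mpr hbd
    nlinarith
  -- value at 1
  have hkge1 : 1 ≤ kbar := by
    rw [hkbar]
    calc (1:ℝ) = ∑ i : Fin n, p i := hsum.symm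
      _ ≤ ∑ i : Fin n, ((i:ℝ)+1) * p i := by
          apply Finset.sum_le_sum
          intro i _
          have hi : (0:ℝ) ≤ (i:ℝ) := by positivity
          nlinarith [hp i]
  have hf1lt : f 1 < kbar := by
    have hlt : f 1 < ∑ i : Fin n, p i := by
      apply Finset.sum_lt_sum
      · intro i _
        have h1 := hden i 1 zero_le_one
        rw [div_le_iff₀ h1]
        have := hipos i
        nlinarith [hp i]
      · refine ⟨j, Finset.mem_univ j, ?_⟩
        have h1 := hden j 1 zero_le_one
        rw [div_lt_iff₀ h1]
        have := hipos j
        nlinarith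
    rw [hsum] at hlt
    linarith
  -- IVT to find Φ with f Φ = kbar
  have hsub := intermediate_value_Icc' (by norm_num : (0:ℝ) ≤ 1) hcont
  obtain ⟨Φ, hΦmem, hfΦ⟩ := hsub ⟨hf1lt.le, hf0gt.le⟩
  have hΦpos : 0 < Φ := by
    rcases lt_or_eq_of_le hΦmem.1 with h | h
    · exact h
    · exfalso; rw [← h] at hfΦ; rw [hfΦ] at hf0gt; exact lt_irrefl _ hf0gt
  -- key: for x > 0, the equation is equivalent to f x = kbar
  have hsum_eq : ∀ x : ℝ,
      (∑ i : Fin n, ((i : ℝ) + 1) * p i * b * x / (d + b * ((i : ℝ) + 1) * x)) = x * f x := by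
    intro x
    rw [hf, Finset.mul_sum]
    apply Finset.sum_congr rfl
    intro i _
    ring
  have hkne : kbar ≠ 0 := ne_of_gt hkpos
  refine ⟨Φ, ⟨hΦpos, hΦmem.2, ?_⟩, ?_⟩
  · rw [hsum_eq, hfΦ]
    field_simp
  · rintro y ⟨hy0, hy1, hyeq⟩
    rw [hsum_eq] at hyeq
    have hfy : f y = kbar := by
      have h1 : kbar * y = y * f y := by
        calc kbar * y = kbar * (1 / kbar * (y * f y)) := by rw [← hyeq]
          _ = y * f y := by field_simp
      have h2 := mul_left_cancel₀ (ne_of_gt hy0)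
        (by linarith : y * kbar = y * f y)
      linarith
    exact hanti.injOn (Set.mem_Ici.mpr hy0.le) (Set.mem_Ici.mpr hΦpos.le)
      (by rw [hfy, hfΦ])
end

section
/- Fix positive constants λ, δ, μ, ω, d, ξ, N* and f₀ with δ < 1. Define f(Θ) = λN*(ω+δλΘ+δμ+d)/(A Θ² + B Θ + C) with A = δλ²(1+f₀), B = δλξ + λ(1+f₀)(d+ω+δμ), C = (d+μ+ω)ξ. If δ(1-δ)ξμ/((1+f₀)(ω+d+δμ)²) ≤ 1, then f is strictly decreasing on [0,∞). -/
theorem sviqs_summand_strictAnti (lam δ μ ω d ξ Nstar f₀ : ℝ)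
    (hlam : 0 < lam) (hδ : 0 < δ) (hδ1 : δ < 1) (hμ : 0 < μ) (hω : 0 < ω)
    (hd : 0 < d) (hξ : 0 < ξ) (hN : 0 < Nstar) (hf₀ : 0 < f₀)
    (hR1 : δ * (1 - δ) * ξ * μ / ((1 + f₀) * (ω + d + δ * μ) ^ 2) ≤ 1) :
    StrictAntiOn (fun Θ : ℝ =>
      lam * Nstar * (ω + δ * lam * Θ + δ * μ + d) /
        ((δ * lam ^ 2 * (1 + f₀)) * Θ ^ 2 +
          (δ * lam * ξ + lam * (1 + f₀) * (d + ω + δ * μ)) * Θ +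
          (d + μ + ω) * ξ)) (Set.Ici 0) := by
  have hden : 0 < (1 + f₀) * (ω + d + δ * μ) ^ 2 := by positivity
  have h2 : δ * (1 - δ) * ξ * μ ≤ (1 + f₀) * (ω + d + δ * μ) ^ 2 := by
    rw [div_le_one hden] at hR1; exact hR1
  intro x hx y hy hxy
  simp only [Set.mem_Ici] at hx hy
  set a : ℝ := ω + δ * μ + d with ha
  set A : ℝ := δ * lam ^ 2 * (1 + f₀) with hA
  set B : ℝ := δ * lam * ξ + lam * (1 + f₀) * (d + ω + δ * μ) with hB
  set C : ℝ := (d + μ + ω) * ξ with hC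
  have hApos : 0 < A := by rw [hA]; positivity
  have hBpos : 0 < B := by rw [hB]; positivity
  have hCpos : 0 < C := by rw [hC]; positivity
  have hQx : 0 < A * x ^ 2 + B * x + C := by
    have h1 : 0 ≤ A * x ^ 2 := by positivity
    have h2 : 0 ≤ B * x := mul_nonneg hBpos.le hx
    linarith
  have hQy : 0 < A * y ^ 2 + B * y + C := by
    have h1 : 0 ≤ A * y ^ 2 := by positivity
    have h2 : 0 ≤ B * y := mul_nonneg hBpos.le hy
    linarith
  have hy0 : 0 < y := lt_of_le_of_lt hx hxy
  have hapos : 0 < a := by rw [ha]; positivity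
  -- a*B - δ*lam*C ≥ 0
  have hkey : δ * lam * C ≤ a * B := by
    have : a * B - δ * lam * C =
        lam * ((1 + f₀) * (ω + d + δ * μ) ^ 2 - δ * (1 - δ) * ξ * μ) := by
      rw [ha, hB, hC]; ring
    nlinarith [mul_le_mul_of_nonneg_left h2 hlam.le]
  have hbracket : 0 < a * A * (x + y) + (δ * lam) * A * (x * y) + (a * B - δ * lam * C) := by
    have h3 : 0 < a * A * (x + y) := by
      have : 0 < x + y := by linarith
      positivity
    have h4 : 0 ≤ (δ * lam) * A * (x * y) := by
      have : 0 ≤ x * y := mul_nonneg hx hy0.le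
      positivity
    linarith
  show lam * Nstar * (ω + δ * lam * y + δ * μ + d) / (A * y ^ 2 + B * y + C) <
      lam * Nstar * (ω + δ * lam * x + δ * μ + d) / (A * x ^ 2 + B * x + C)
  rw [div_lt_div_iff₀ hQy hQx]
  have hid : lam * Nstar * (ω + δ * lam * x + δ * μ + d) * (A * y ^ 2 + B * y + C) -
      lam * Nstar * (ω + δ * lam * y + δ * μ + d) * (A * x ^ 2 + B * x + C) =
      lam * Nstar * ((y - x) *
        (a * A * (x + y) + (δ * lam) * A * (x * y) + (a * B - δ * lam * C))) := by
    rw [ha]; ring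
  have hpos : 0 < lam * Nstar * ((y - x) *
      (a * A * (x + y) + (δ * lam) * A * (x * y) + (a * B - δ * lam * C))) := by
    have hyx : 0 < y - x := by linarith
    positivity
  linarith
end
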